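/- arXiv:2605.18877 — 2 statements merged into one kernel-verified Lean document; each statement's English description precedes it below -/
import Mathlib

section
/- Let p = (p_0, p_1) be a probability distribution on {0,1}, let τ_0, τ_1 ∈ [0,1] and alias labels alias_0, alias_1 ∈ {0,1} satisfy the alias-sampling identities p_0 = (τ_0 + Σ_{k: alias_k = 0} (1 - τ_k))/2 and p_1 = (τ_1 + Σ_{k: alias_k = 1} (1 - τ_k))/2, and suppose each index j ∈ {0,1} has exactly one k with alias_k = j. Define keep_j = ⌊2^b τ_j⌋ and p̃_j = (keep_j + Σ_{k: alias_k = j} (2^b - keep_k)) / 2^{b+1}. Then |p_j - p̃_j| ≤ 2^{-b} for each j ∈ {0,1}. -/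
open scoped Classical

/-- Single-qubit al-sampling discretization error: `|p_j - p̃_j| ≤ 2^{-b}`. -/
theorem stmt_0 (b : ℕ) (hb : 1 ≤ b) (p τ : Fin 2 → ℝ) (al : Fin 2 → Fin 2)
    (hp : ∀ j, 0 ≤ p j) (hpsum : p 0 + p 1 = 1)
    (hτ : ∀ j, τ j ∈ Set.Icc (0 : ℝ) 1)
    (halias : ∀ j : Fin 2, ∃! k : Fin 2, al k = j)
    (hid : ∀ j, p j =
      (τ j + ∑ k ∈ Finset.univ.filter (fun k => al k = j), (1 - τ k)) / 2)
    (keep : Fin 2 → ℤ) (hkeep : ∀ j, keep j = ⌊(2 : ℝ) ^ b * τ j⌋)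
    (ptil : Fin 2 → ℝ)
    (hptil : ∀ j, ptil j =
      ((keep j : ℝ) +
        ∑ k ∈ Finset.univ.filter (fun k => al k = j), ((2 : ℝ) ^ b - (keep k : ℝ)))
        / 2 ^ (b + 1)) :
    ∀ j, |p j - ptil j| ≤ (2 : ℝ) ^ (-(b : ℤ)) := by
  intro j
  obtain ⟨k, hk, hku⟩ := halias j
  have hfil : Finset.univ.filter (fun m => al m = j) = {k} := by
    apply Finset.eq_singleton_iff_unique_mem.mpr
    refine ⟨by simp [hk], fun m hm => hku m (by simpa using hm)⟩
  have E : (0:ℝ) < 2 ^ b := by positivity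
  have haj0 : (keep j : ℝ) ≤ 2 ^ b * τ j := by rw [hkeep]; exact Int.floor_le _
  have haj1 : 2 ^ b * τ j < (keep j : ℝ) + 1 := by rw [hkeep]; exact Int.lt_floor_add_one _
  have hak0 : (keep k : ℝ) ≤ 2 ^ b * τ k := by rw [hkeep]; exact Int.floor_le _
  have hak1 : 2 ^ b * τ k < (keep k : ℝ) + 1 := by rw [hkeep]; exact Int.lt_floor_add_one _
  rw [hid j, hptil j, hfil, Finset.sum_singleton, Finset.sum_singleton]
  have h2 : (2:ℝ) ^ (-(b:ℤ)) = 1 / 2 ^ b := by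
    rw [zpow_neg]; simp [zpow_natCast]
  rw [h2]
  have hdiff : (τ j + (1 - τ k)) / 2 -
      ((keep j : ℝ) + ((2:ℝ) ^ b - (keep k : ℝ))) / 2 ^ (b + 1)
      = ((2 ^ b * τ j - keep j) - (2 ^ b * τ k - keep k)) / (2 * 2 ^ b) := by
    have : (2:ℝ) ^ (b+1) = 2 * 2 ^ b := by ring
    rw [this]
    field_simp
    ring
  rw [hdiff, abs_div, abs_of_pos (show (0:ℝ) < 2 * 2 ^ b by positivity), div_le_div_iff₀ (show (0:ℝ) < 2 * 2 ^ b by positivity) E]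
  have hnum : |(2 ^ b * τ j - (keep j : ℝ)) - (2 ^ b * τ k - (keep k : ℝ))| ≤ 2 := by
    rw [abs_le]; constructor <;> linarith
  nlinarith [hnum, E, abs_nonneg ((2 ^ b * τ j - (keep j : ℝ)) - (2 ^ b * τ k - (keep k : ℝ))), le_abs_self ((2 ^ b * τ j - (keep j : ℝ)) - (2 ^ b * τ k - (keep k : ℝ)))]
end

section
/- For any probability distribution p on {0,…,L-1} with L ≥ 1, there exist τ : {0,…,L-1} → [0,1] and alias : {0,…,L-1} → {0,…,L-1} such that p_j = (τ_j + Σ_{k : alias_k = j} (1 - τ_k)) / L for every j (existence of a valid alias table). -/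
open scoped Classical

lemma alias_aux : ∀ (n L : ℕ) (s : Finset (Fin L)) (q : Fin L → ℝ),
    s.card = n → (∀ j ∈ s, 0 ≤ q j) → (∑ j ∈ s, q j) = s.card →
    ∃ (τ : Fin L → ℝ) (al : Fin L → Fin L),
      (∀ j ∈ s, τ j ∈ Set.Icc (0 : ℝ) 1) ∧ (∀ k ∈ s, al k ∈ s) ∧
      ∀ j ∈ s, q j = τ j + ∑ k ∈ s.filter (fun k => al k = j), (1 - τ k) := by
  intro n
  induction n with
  | zero =>
    intro L s q hcard _ _
    refine ⟨fun _ => 0, id, ?_, ?_, ?_⟩ <;> simp_all [Finset.card_eq_zero.mp hcard]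
  | succ n ih =>
    intro L s q hcard hq hsum
    have hne : s.Nonempty := Finset.card_pos.mp (by omega)
    -- find j with q j ≤ 1
    obtain ⟨j, hjs, hj1⟩ : ∃ j ∈ s, q j ≤ 1 := by
      by_contra h
      push_neg at h
      have : (s.card : ℝ) < ∑ j ∈ s, q j := by
        calc (s.card : ℝ) = ∑ _j ∈ s, (1:ℝ) := by simp
        _ < ∑ j ∈ s, q j := Finset.sum_lt_sum_of_nonempty hne (fun i hi => h i hi)
      linarith [this, hsum.ge]
    by_cases hone : s.card = 1
    · -- single element
      obtain ⟨a, ha⟩ := Finset.card_eq_one.mp hone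
      subst ha
      simp only [Finset.mem_singleton] at hjs
      subst hjs
      have hq1 : q j = 1 := by simpa using hsum
      refine ⟨fun _ => 1, id, ?_, ?_, ?_⟩ <;> simp_all
    · -- at least two elements
      set s' := s.erase j with hs'
      have hcard' : s'.card = n := by
        rw [hs', Finset.card_erase_of_mem hjs, hcard]
        omega
      have hne' : s'.Nonempty := Finset.card_pos.mp (by omega)
      have hsum' : ∑ k ∈ s', q k = s.card - q j := by
        have := Finset.sum_erase_add s q hjs
        push_cast
        linarith [this, hsum]
      obtain ⟨i, his', hi1⟩ : ∃ i ∈ s', 1 - q j ≤ q i := by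
        by_contra h
        push_neg at h
        have hlt : ∑ k ∈ s', q k < ∑ _k ∈ s', (1 - q j) :=
          Finset.sum_lt_sum_of_nonempty hne' (fun k hk => h k hk)
        rw [Finset.sum_const, hcard', nsmul_eq_mul] at hlt
        have hn1 : (1:ℝ) ≤ n := by exact_mod_cast Nat.one_le_iff_ne_zero.mpr (by omega)
        have hc : (s.card : ℝ) = n + 1 := by rw [hcard]; push_cast; ring
        rw [hsum', hc] at hlt
        nlinarith [hq j hjs]
      -- new weights
      set q' : Fin L → ℝ := Function.update q i (q i - (1 - q j)) with hq'
      have hq'nonneg : ∀ k ∈ s', 0 ≤ q' k := by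
        intro k hk
        rcases eq_or_ne k i with rfl | hki
        · simp [hq', Function.update_self]; linarith
        · rw [hq', Function.update_of_ne hki]
          exact hq k (Finset.mem_of_mem_erase hk)
      have hq'sum : ∑ k ∈ s', q' k = s'.card := by
        have hi_mem : i ∈ s' := his'
        have : ∑ k ∈ s', q' k = (∑ k ∈ s', q k) - (1 - q j) := by
          rw [← Finset.sum_erase_add s' q' hi_mem, ← Finset.sum_erase_add s' q hi_mem]
          have heq : ∀ k ∈ s'.erase i, q' k = q k := by
            intro k hk
            rw [hq', Function.update_of_ne (Finset.ne_of_mem_erase hk)]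
          rw [Finset.sum_congr rfl heq, hq', Function.update_self]
          ring
        rw [this, hsum', hcard', hcard]
        push_cast; ring
      obtain ⟨τ', al', hτ', hal', hrep⟩ := ih L s' q' hcard' hq'nonneg (by rw [hq'sum])
      -- assemble
      refine ⟨Function.update τ' j (q j), Function.update al' j i, ?_, ?_, ?_⟩
      · intro k hk
        rcases eq_or_ne k j with rfl | hkj
        · rw [Function.update_self]; exact ⟨hq k hk, hj1⟩
        · rw [Function.update_of_ne hkj]
          exact hτ' k (Finset.mem_erase.mpr ⟨hkj, hk⟩)
      · intro k hk
        rcases eq_or_ne k j with rfl | hkj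
        · rw [Function.update_self]; exact Finset.mem_of_mem_erase his'
        · rw [Function.update_of_ne hkj]
          exact Finset.mem_of_mem_erase (hal' k (Finset.mem_erase.mpr ⟨hkj, hk⟩))
      · intro m hm
        have hji : j ≠ i := fun h => (Finset.ne_of_mem_erase his') h.symm
        have hfilter : ∀ m' : Fin L,
            s.filter (fun k => Function.update al' j i k = m') =
            (if i = m' then {j} else ∅) ∪ s'.filter (fun k => al' k = m') := by
          intro m'
          ext k
          simp only [Finset.mem_filter, Finset.mem_union, Finset.mem_singleton]
          constructor
          · rintro ⟨hks, hkm⟩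
            rcases eq_or_ne k j with rfl | hkj
            · rw [Function.update_self] at hkm
              subst hkm; simp
            · rw [Function.update_of_ne hkj] at hkm
              right; exact ⟨Finset.mem_erase.mpr ⟨hkj, hks⟩, hkm⟩
          · intro h
            rcases h with h | ⟨hk', hkm⟩
            · split_ifs at h with hi'
              · subst hi'
                simp only [Finset.mem_singleton] at h
                subst h
                exact ⟨hjs, by rw [Function.update_self]⟩
              · simp at h
            · refine ⟨Finset.mem_of_mem_erase hk', ?_⟩
              rw [Function.update_of_ne (Finset.ne_of_mem_erase hk')]
              exact hkm
        have hτeq : ∀ k ∈ s'.filter (fun k => al' k = m),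
            (1 - Function.update τ' j (q j) k) = 1 - τ' k := by
          intro k hk
          rw [Function.update_of_ne (Finset.ne_of_mem_erase (Finset.mem_filter.mp hk).1)]
        have hjnot : j ∉ s'.filter (fun k => al' k = m) := by
          simp [hs', Finset.mem_filter]
        rcases eq_or_ne m j with rfl | hmj
        · -- m = j : filter is just empty union
          rw [hfilter m, if_neg (Ne.symm hji), Finset.empty_union]
          have hsum0 : s'.filter (fun k => al' k = m) = ∅ := by
            apply Finset.filter_eq_empty_iff.mpr
            intro k hk h
            exact Finset.ne_of_mem_erase (h ▸ hal' k hk) rfl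
          rw [hsum0, Function.update_self]
          simp
        · rw [Function.update_of_ne hmj, hfilter m]
          have hm' : m ∈ s' := Finset.mem_erase.mpr ⟨hmj, hm⟩
          have hqm : q' m = τ' m + ∑ k ∈ s'.filter (fun k => al' k = m), (1 - τ' k) :=
            hrep m hm'
          rcases eq_or_ne i m with rfl | him
          · rw [if_pos rfl]
            rw [Finset.sum_union (by simp [hjnot])]
            rw [Finset.sum_singleton, Function.update_self,
              Finset.sum_congr rfl hτeq]
            have : q' i = q i - (1 - q j) := by rw [hq', Function.update_self]
            rw [this] at hqm
            linarith [hqm]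
          · rw [if_neg him, Finset.empty_union, Finset.sum_congr rfl hτeq]
            have : q' m = q m := by rw [hq', Function.update_of_ne (Ne.symm him)]
            rw [this] at hqm
            exact hqm

/-- Existence of a valid al table (correctness of Vose's construction). -/
theorem stmt_10 (L : ℕ) (hL : 1 ≤ L) (p : Fin L → ℝ)
    (hp : ∀ j, 0 ≤ p j) (hpsum : ∑ j, p j = 1) :
    ∃ (τ : Fin L → ℝ) (al : Fin L → Fin L),
      (∀ j, τ j ∈ Set.Icc (0 : ℝ) 1) ∧
      ∀ j, p j =
        (τ j + ∑ k ∈ Finset.univ.filter (fun k => al k = j), (1 - τ k)) / L := by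
  obtain ⟨τ, al, hτ, _, hrep⟩ := alias_aux L L (Finset.univ : Finset (Fin L))
    (fun j => L * p j) (by simp) (fun j _ => mul_nonneg (by positivity) (hp j))
    (by rw [← Finset.mul_sum, hpsum]; simp)
  refine ⟨τ, al, fun j => hτ j (Finset.mem_univ j), fun j => ?_⟩
  have h := hrep j (Finset.mem_univ j)
  have hL0 : (L : ℝ) ≠ 0 := by positivity
  rw [eq_div_iff hL0, mul_comm]
  exact h
end
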